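/- In the LDA setting, the Youden-optimal threshold is θ_Youden = 0; that is, θ ↦ TPR(θ) − FPR(θ) attains its maximum at θ = 0. -/

import Mathlib

/-! The LDA offsets `a₀ = αᵗμ₀ + β` and `a₁ = αᵗμ₁ + β` satisfy `a₀ = -a₁` with `a₁ ≥ 0`, so
`TPR θ - FPR θ = Φ((θ + a₁)/‖γ‖) - Φ((θ - a₁)/‖γ‖)` is the standard normal mass of an interval of
fixed length centred at `θ/‖γ‖`. Since the density is even and decreasing in `|x|`, that mass is
largest for the centred interval, i.e. at `θ = 0`. -/

open Matrix MeasureTheory Real Set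

/-- Standard normal CDF. -/
noncomputable def stdCDF (t : ℝ) : ℝ :=
  ∫ s in Set.Iic t, Real.exp (-s ^ 2 / 2) / Real.sqrt (2 * Real.pi)

/-- Standard normal density. -/
noncomputable def stdPDF (t : ℝ) : ℝ :=
  Real.exp (-t ^ 2 / 2) / Real.sqrt (2 * Real.pi)

/-- Inverse of the standard normal CDF (on (0,1)). -/
noncomputable def stdCDFInv : ℝ → ℝ := Function.invFun stdCDF

/-- Euclidean norm of a vector. -/
noncomputable def vnorm {n : ℕ} (v : Fin n → ℝ) : ℝ := Real.sqrt (v ⬝ᵥ v)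

/-- Density of the multivariate normal N(μ, Σ). -/
noncomputable def mvNormalPDF {n : ℕ} (μ : Fin n → ℝ) (S : Matrix (Fin n) (Fin n) ℝ)
    (x : Fin n → ℝ) : ℝ :=
  (2 * Real.pi) ^ (-(n : ℝ) / 2) * S.det ^ (-(1 : ℝ) / 2) *
    Real.exp (-(1 / 2) * ((x - μ) ⬝ᵥ S⁻¹.mulVec (x - μ)))

/-- Entrywise square root of a diagonal matrix. -/
noncomputable def sqrtD {n : ℕ} (L : Matrix (Fin n) (Fin n) ℝ) : Matrix (Fin n) (Fin n) ℝ :=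
  Matrix.diagonal (fun i => Real.sqrt (L i i))

section StdNormal

lemma stdPDF_neg (x : ℝ) : stdPDF (-x) = stdPDF x := by
  rw [stdPDF, stdPDF, neg_sq]

lemma stdPDF_le_of_abs_le {x y : ℝ} (h : |x| ≤ |y|) : stdPDF y ≤ stdPDF x := by
  have hsq : x ^ 2 ≤ y ^ 2 := sq_le_sq.mpr h
  unfold stdPDF
  gcongr

lemma integrable_stdPDF : Integrable stdPDF := by
  have h : stdPDF = fun x : ℝ => Real.exp (-(1 / 2) * x ^ 2) / Real.sqrt (2 * π) := by
    funext x; unfold stdPDF; ring_nf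
  rw [h]
  exact (integrable_exp_neg_mul_sq (by norm_num : (0 : ℝ) < 1 / 2)).div_const _

lemma intervalIntegrable_stdPDF (a b : ℝ) : IntervalIntegrable stdPDF volume a b :=
  integrable_stdPDF.intervalIntegrable

lemma stdCDF_sub_stdCDF (a b : ℝ) : stdCDF b - stdCDF a = ∫ x in a..b, stdPDF x :=
  intervalIntegral.integral_Iic_sub_Iic integrable_stdPDF.integrableOn
    integrable_stdPDF.integrableOn

lemma integral_stdPDF_neg_interval (a b : ℝ) :
    ∫ x in (-b)..(-a), stdPDF x = ∫ x in a..b, stdPDF x := by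
  rw [← intervalIntegral.integral_comp_neg]
  simp only [stdPDF_neg]

/-- Moving the interval `[t - u, t + u]` right by `t` trades `[-u, t - u]` for `[u, t + u]`,
and the density on the latter is the shift by `2u` of the density on the former. -/
lemma integral_stdPDF_shifted_le_centered {t u : ℝ} (ht : 0 ≤ t) (hu : 0 ≤ u) :
    ∫ x in (t - u)..(t + u), stdPDF x ≤ ∫ x in (-u)..u, stdPDF x := by
  have split_centered := intervalIntegral.integral_add_adjacent_intervals
    (intervalIntegrable_stdPDF (-u) u) (intervalIntegrable_stdPDF u (t + u))
  have split_shifted := intervalIntegral.integral_add_adjacent_intervals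
    (intervalIntegrable_stdPDF (-u) (t - u)) (intervalIntegrable_stdPDF (t - u) (t + u))
  have shift : ∫ x in u..(t + u), stdPDF x = ∫ x in (-u)..(t - u), stdPDF (x + 2 * u) := by
    rw [intervalIntegral.integral_comp_add_right]
    congr 1 <;> ring
  have shift_integrable :
      IntervalIntegrable (fun x => stdPDF (x + 2 * u)) volume (-u) (t - u) := by
    simpa [show u - 2 * u = -u by ring, show t + u - 2 * u = t - u by ring] using
      (intervalIntegrable_stdPDF u (t + u)).comp_add_right (2 * u)
  have shift_le : ∫ x in (-u)..(t - u), stdPDF (x + 2 * u) ≤ ∫ x in (-u)..(t - u), stdPDF x := by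
    refine intervalIntegral.integral_mono_on (by linarith) shift_integrable
      (intervalIntegrable_stdPDF _ _) fun x hx => stdPDF_le_of_abs_le ?_
    rw [abs_of_nonneg (by linarith [hx.1] : 0 ≤ x + 2 * u)]
    exact abs_le.mpr ⟨by linarith [hx.1], by linarith⟩
  linarith

lemma stdCDF_add_sub_stdCDF_sub_le (t : ℝ) {u : ℝ} (hu : 0 ≤ u) :
    stdCDF (t + u) - stdCDF (t - u) ≤ stdCDF u - stdCDF (-u) := by
  rw [stdCDF_sub_stdCDF, stdCDF_sub_stdCDF]
  rcases le_total 0 t with ht | ht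
  · exact integral_stdPDF_shifted_le_centered ht hu
  · rw [← integral_stdPDF_neg_interval]
    convert integral_stdPDF_shifted_le_centered (neg_nonneg.mpr ht) hu using 2 <;> ring

end StdNormal

section LDA

variable {ι : Type*} [Fintype ι] {B : Matrix ι ι ℝ}

lemma Matrix.IsHermitian.mulVec_sub_dotProduct_add (hB : B.IsHermitian) (v w : ι → ℝ) :
    (B *ᵥ (v - w)) ⬝ᵥ (w + v) = v ⬝ᵥ B *ᵥ v - w ⬝ᵥ B *ᵥ w := by
  have cross : v ⬝ᵥ B *ᵥ w = w ⬝ᵥ B *ᵥ v := by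
    rw [dotProduct_mulVec, ← mulVec_transpose, ← conjTranspose_eq_transpose_of_trivial, hB.eq,
      dotProduct_comm]
  rw [dotProduct_comm, mulVec_sub, dotProduct_sub, add_dotProduct, add_dotProduct, cross]
  ring

lemma Matrix.PosSemidef.mulVec_dotProduct_self_nonneg (hB : B.PosSemidef) (v : ι → ℝ) :
    0 ≤ (B *ᵥ v) ⬝ᵥ v := by
  simpa [dotProduct_comm] using hB.dotProduct_mulVec_nonneg v

end LDA

theorem youden_threshold_zero_general {n : ℕ} (μ₀ μ₁ : Fin n → ℝ)
    (S : Matrix (Fin n) (Fin n) ℝ)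
    (hS : S.PosDef)
    (α γ : Fin n → ℝ) (β : ℝ)
    (hα : α = S⁻¹.mulVec (μ₁ - μ₀))
    (hβ : β = (1 / 2) * (μ₀ ⬝ᵥ S⁻¹.mulVec μ₀ - μ₁ ⬝ᵥ S⁻¹.mulVec μ₁))
    (FPR TPR : ℝ → ℝ)
    (hFPR : ∀ θ, FPR θ = 1 - stdCDF ((θ - (α ⬝ᵥ μ₀ + β)) / vnorm γ))
    (hTPR : ∀ θ, TPR θ = 1 - stdCDF ((θ - (α ⬝ᵥ μ₁ + β)) / vnorm γ)) :
    ∀ θ : ℝ, TPR θ - FPR θ ≤ TPR 0 - FPR 0 := by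
  have hSinv : S⁻¹.PosDef := hS.inv
  have offsets_cancel : (α ⬝ᵥ μ₀ + β) + (α ⬝ᵥ μ₁ + β) = 0 := by
    have := hSinv.isHermitian.mulVec_sub_dotProduct_add μ₁ μ₀
    rw [← hα, dotProduct_add] at this
    linarith
  have offsets_ordered : α ⬝ᵥ μ₀ ≤ α ⬝ᵥ μ₁ := by
    have := hSinv.posSemidef.mulVec_dotProduct_self_nonneg (μ₁ - μ₀)
    rw [← hα, dotProduct_sub] at this
    linarith
  set a := α ⬝ᵥ μ₁ + β
  set c := vnorm γ
  have ha : 0 ≤ a / c := div_nonneg (by linarith) (Real.sqrt_nonneg _)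
  have ha₀ : α ⬝ᵥ μ₀ + β = -a := by linarith
  intro θ
  simp only [hFPR, hTPR, ha₀, zero_sub, sub_neg_eq_add, zero_add, sub_div, add_div, neg_div]
  linarith [stdCDF_add_sub_stdCDF_sub_le (θ / c) ha]

theorem youden_threshold_zero {n : ℕ} (μ₀ μ₁ : Fin n → ℝ) (hμ : μ₀ ≠ μ₁)
    (S Q L : Matrix (Fin n) (Fin n) ℝ)
    (hS : S.PosDef) (hQ : Q ∈ Matrix.orthogonalGroup (Fin n) ℝ)
    (hL : L.IsDiag) (hLpos : ∀ i, 0 < L i i)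
    (hdecomp : S = Q * L * Qᵀ)
    (α γ : Fin n → ℝ) (β : ℝ)
    (hα : α = S⁻¹.mulVec (μ₁ - μ₀))
    (hβ : β = (1 / 2) * (μ₀ ⬝ᵥ S⁻¹.mulVec μ₀ - μ₁ ⬝ᵥ S⁻¹.mulVec μ₁))
    (hγ : γ = (sqrtD L * Qᵀ).mulVec α)
    (FPR TPR : ℝ → ℝ)
    (hFPR : ∀ θ, FPR θ = 1 - stdCDF ((θ - (α ⬝ᵥ μ₀ + β)) / vnorm γ))
    (hTPR : ∀ θ, TPR θ = 1 - stdCDF ((θ - (α ⬝ᵥ μ₁ + β)) / vnorm γ)) :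
    ∀ θ : ℝ, TPR θ - FPR θ ≤ TPR 0 - FPR 0 :=
  youden_threshold_zero_general μ₀ μ₁ S hS α γ β hα hβ FPR TPR hFPR hTPR
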